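/- Let k, ℓ > 0, let π1 ∈ T_k and π2 ∈ T_ℓ, let t = slmax(π2), and let i be an integer with 1 ≤ i ≤ t. Then C2(π1, π2, i) is a two-stack sortable permutation of length k+ℓ+1. -/

import Mathlib

/-!
A permutation `σ` of `{1, …, n}` is two-stack sortable iff `S(σ)` avoids 231, since a list of
distinct entries is sorted by `S` iff it avoids 231. Both relabellings in `C2(π1, π2, i)` are
order-preserving and `k + ℓ + 1` is its largest entry, so `S(C2)` is the concatenation of the
relabelled `S(π1)`, the relabelled `S(π2)`, and `k + ℓ + 1`. A 231 inside one block would come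
from one in `S(π1)` or `S(π2)`. The only entry of the first block exceeding entries of the second is
`k + a_i`, the image of `k`; a 231 through it needs entries `b > a_i` followed by `c ≤ a_i` in
`S(π2)`, and as `a_i` is a left-to-right maximum, `a_i, b, c` is then already a 231 in `S(π2)`.
-/

namespace TSP

theorem foldr_max_mem {α : Type} [LinearOrder α] (x : α) (l : List α) :
    l.foldr max x ∈ x :: l := by
  induction l with
  | nil => simp
  | cons a t ih =>
    simp only [List.foldr_cons]
    rcases max_choice a (t.foldr max x) with h | h <;> rw [h]
    · simp
    · rcases List.mem_cons.mp ih with h' | h'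
      · rw [h']; simp
      · exact List.mem_cons.mpr (Or.inr (List.mem_cons.mpr (Or.inr h')))

theorem length_takeWhile_lt {α : Type} [DecidableEq α] {m : α} {l : List α}
    (h : m ∈ l) : (l.takeWhile (· ≠ m)).length < l.length := by
  have hd : l.dropWhile (· ≠ m) ≠ [] := by
    intro hnil
    have := List.dropWhile_eq_nil_iff.mp hnil m h
    simp at this
  have hsum : (l.takeWhile (· ≠ m)).length + (l.dropWhile (· ≠ m)).length = l.length := by
    rw [← List.length_append, List.takeWhile_append_dropWhile]
  have : 0 < (l.dropWhile (· ≠ m)).length := List.length_pos_iff.mpr hd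
  omega

theorem length_tail_dropWhile_lt {α : Type} [DecidableEq α] {m : α} {l : List α}
    (h : l ≠ []) : ((l.dropWhile (· ≠ m)).tail).length < l.length := by
  have hsum : (l.takeWhile (· ≠ m)).length + (l.dropWhile (· ≠ m)).length = l.length := by
    rw [← List.length_append, List.takeWhile_append_dropWhile]
  have h2 : ((l.dropWhile (· ≠ m)).tail).length = (l.dropWhile (· ≠ m)).length - 1 :=
    List.length_tail
  have : 0 < l.length := List.length_pos_iff.mpr h
  omega

/-- The stack-sorting operator `S`: `S(ε) = ε`, and if `A` is nonempty with
largest element `m` and `A = A_L · (m) · A_R`, then `S(A) = S(A_L) · S(A_R) · (m)`. -/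
def S {α : Type} [LinearOrder α] : List α → List α
  | [] => []
  | x :: l =>
    let m := l.foldr max x
    S ((x :: l).takeWhile (· ≠ m)) ++ S (((x :: l).dropWhile (· ≠ m)).tail) ++ [m]
termination_by l => l.length
decreasing_by
  · exact length_takeWhile_lt (by simpa [List.foldr_attach] using foldr_max_mem x l)
  · exact length_tail_dropWhile_lt (by simp)

/-- The identity permutation `id_n = (1, 2, …, n)` as a list. -/
def idPerm (n : ℕ) : List ℕ := List.range' 1 n

/-- `l` is a permutation of `{1, …, n}` (viewed as a sequence). -/
def IsPermOf (n : ℕ) (l : List ℕ) : Prop := l.Perm (idPerm n)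

/-- `l` is a two-stack sortable permutation (of `{1, …, len l}`). -/
def Is2SS (l : List ℕ) : Prop := IsPermOf l.length l ∧ S (S l) = idPerm l.length

/-- `σ^{+k}`: add `k` to every entry. -/
def shift (k : ℕ) (l : List ℕ) : List ℕ := l.map (· + k)

/-- `σ^{+(k1,m,k2)}`: add `k1` to every entry strictly smaller than `m`, `k2` to the others. -/
def shift3 (k1 m k2 : ℕ) (l : List ℕ) : List ℕ :=
  l.map (fun a => if a < m then a + k1 else a + k2)

/-- Standardization `P(A)`: the permutation of `{1,…,len A}` in the same relative order. -/
def stand (l : List ℕ) : List ℕ := l.map (fun a => (l.filter (fun b => b ≤ a)).length)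

/-- Avoidance of the pattern 231: no positions `i < j < k` with `l(k) < l(i) < l(j)`. -/
def Avoids231 (l : List ℕ) : Prop :=
  ¬ ∃ i j k, i < j ∧ j < k ∧ k < l.length ∧
      l.getD k 0 < l.getD i 0 ∧ l.getD i 0 < l.getD j 0

/-- The list of values of the left-to-right maxima of `l`, in order. -/
def lrMaxima (l : List ℕ) : List ℕ :=
  ((List.range l.length).filter
    (fun i => (l.take i).all (fun b => b < l.getD i 0))).map (fun i => l.getD i 0)

/-- `lmax`: the number of left-to-right maxima. -/
def lmax (l : List ℕ) : ℕ :=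
  (List.range l.length).countP (fun i => (l.take i).all (fun b => b < l.getD i 0))

/-- `rmax`: the number of right-to-left maxima. -/
def rmax (l : List ℕ) : ℕ :=
  (List.range l.length).countP (fun i => (l.drop (i+1)).all (fun b => b < l.getD i 0))

/-- `asc`: the number of ascents. -/
def asc (l : List ℕ) : ℕ :=
  (List.range (l.length - 1)).countP (fun i => l.getD i 0 < l.getD (i+1) 0)

/-- `des`: the number of descents. -/
def des (l : List ℕ) : ℕ :=
  (List.range (l.length - 1)).countP (fun i => l.getD (i+1) 0 < l.getD i 0)

/-- `slmax(π)`: the number of left-to-right maxima of `S(π)`. -/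
def slmax (l : List ℕ) : ℕ := lmax (S l)

/-- `sldes(π)`: the number of entries `a` that precede `a - 1` in `S(π)`. -/
def sldes (l : List ℕ) : ℕ :=
  (List.range (S l).length).countP
    (fun i => ((S l).drop (i+1)).any (fun b => b + 1 = (S l).getD i 0))

/-- The construction `C1(π1, π2) = π1 · (k+ℓ+1) · π2^{+k}`. -/
def C1 (p1 p2 : List ℕ) : List ℕ :=
  p1 ++ (p1.length + p2.length + 1) :: shift p1.length p2

/-- The `i`-th left-to-right maximum `a_i` of `S(π2)` (1-indexed). -/
def lrm (p2 : List ℕ) (i : ℕ) : ℕ := (lrMaxima (S p2)).getD (i - 1) 0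

/-- The construction `C2(π1, π2, i) = π1^{+(0,k,a_i)} · (k+ℓ+1) · π2^{+(k-1,a_i+1,k)}`. -/
def C2 (p1 p2 : List ℕ) (i : ℕ) : List ℕ :=
  shift3 0 p1.length (lrm p2 i) p1 ++
    (p1.length + p2.length + 1) :: shift3 (p1.length - 1) (lrm p2 i + 1) p1.length p2

/-- The decomposition `D(π) = (P(π_ℓ), P(π_r))`, where `π = π_ℓ · (n) · π_r`
with `n` the largest entry of `π`. -/
def D (l : List ℕ) : List ℕ × List ℕ :=
  match l with
  | [] => ([], [])
  | x :: t =>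
    let m := t.foldr max x
    (stand ((x :: t).takeWhile (· ≠ m)), stand (((x :: t).dropWhile (· ≠ m)).tail))


open scoped List

section StackSorting

variable {α : Type} [LinearOrder α]

theorem le_foldr_max (x : α) (l : List α) : ∀ y ∈ x :: l, y ≤ l.foldr max x := by
  induction l with
  | nil => simp
  | cons a t ih =>
    intro y hy
    rcases List.mem_cons.mp hy with rfl | hy
    · exact le_max_of_le_right (ih y (by simp))
    · rcases List.mem_cons.mp hy with rfl | hy
      · exact le_max_left _ _
      · exact le_max_of_le_right (ih y (by simp [hy]))

theorem foldr_max_eq_of_mem {x m : α} {l : List α} (hm : m ∈ x :: l)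
    (hle : ∀ y ∈ x :: l, y ≤ m) : l.foldr max x = m :=
  le_antisymm (hle _ (foldr_max_mem x l)) (le_foldr_max x l m hm)

theorem S_append_cons {L R : List α} {m : α} (hL : ∀ x ∈ L, x < m)
    (hR : ∀ x ∈ R, x ≤ m) : S (L ++ m :: R) = S L ++ S R ++ [m] := by
  obtain ⟨x, t, hxt⟩ : ∃ x t, L ++ m :: R = x :: t := by
    cases L <;> simp
  have hmax : t.foldr max x = m := by
    refine foldr_max_eq_of_mem (by rw [← hxt]; simp) fun y hy => ?_
    rw [← hxt] at hy
    rcases List.mem_append.mp hy with hy | hy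
    · exact (hL y hy).le
    · rcases List.mem_cons.mp hy with rfl | hy
      exacts [le_rfl, hR y hy]
  have hne : ∀ y ∈ L, decide (y ≠ m) = true := fun y hy => by simpa using (hL y hy).ne
  rw [hxt, S, hmax, ← hxt, List.takeWhile_append_of_pos hne, List.dropWhile_append_of_pos hne]
  simp

theorem eq_takeWhile_append_cons_dropWhile (x : α) (t : List α) :
    x :: t = (x :: t).takeWhile (· ≠ t.foldr max x) ++
      t.foldr max x :: ((x :: t).dropWhile (· ≠ t.foldr max x)).tail := by
  set m := t.foldr max x
  have hne : (x :: t).dropWhile (· ≠ m) ≠ [] := fun hnil => by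
    simpa using List.dropWhile_eq_nil_iff.mp hnil m (foldr_max_mem x t)
  have hhead : ((x :: t).dropWhile (· ≠ m)).head hne = m := by
    simpa using List.head_dropWhile_not (fun y => decide (y ≠ m)) hne
  conv_lhs =>
    rw [← List.takeWhile_append_dropWhile (p := fun y => decide (y ≠ m)) (l := x :: t),
      ← List.cons_head_tail hne, hhead]

@[elab_as_elim]
theorem induction_on_max {P : List α → Prop} (nil : P [])
    (append_cons : ∀ L m R, (∀ x ∈ L, x < m) → (∀ x ∈ R, x ≤ m) → P L → P R →
      P (L ++ m :: R)) :
    ∀ l, P l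
  | [] => nil
  | x :: t => by
    rw [eq_takeWhile_append_cons_dropWhile x t]
    refine append_cons _ _ _ (fun y hy => lt_of_le_of_ne ?_ ?_) (fun y hy => le_foldr_max x t y ?_)
      (induction_on_max nil append_cons _) (induction_on_max nil append_cons _)
    · exact le_foldr_max x t y (List.takeWhile_sublist _ |>.subset hy)
    · simpa using List.mem_takeWhile_imp hy
    · exact (List.tail_sublist _ |>.trans (List.dropWhile_sublist _)).subset hy
termination_by l => l.length
decreasing_by
  · exact length_takeWhile_lt (foldr_max_mem x t)
  · exact length_tail_dropWhile_lt (by simp)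

theorem S_perm (l : List α) : S l ~ l := by
  induction l using induction_on_max with
  | nil => simp [S]
  | append_cons L m R hL hR ihL ihR =>
    rw [S_append_cons hL hR]
    calc S L ++ S R ++ [m] ~ L ++ R ++ [m] := (ihL.append ihR).append_right _
      _ ~ m :: (L ++ R) := List.perm_append_singleton _ _
      _ ~ L ++ m :: R := List.perm_middle.symm

theorem S_map {β : Type} [LinearOrder β] {f : α → β} (hf : StrictMono f) (l : List α) :
    S (l.map f) = (S l).map f := by
  induction l using induction_on_max with
  | nil => simp [S]
  | append_cons L m R hL hR ihL ihR =>
    have hL' : ∀ y ∈ L.map f, y < f m := by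
      simpa using fun x hx => hf (hL x hx)
    have hR' : ∀ y ∈ R.map f, y ≤ f m := by
      simpa using fun x hx => hf.monotone (hR x hx)
    rw [List.map_append, List.map_cons, S_append_cons hL' hR', S_append_cons hL hR, ihL, ihR]
    simp

end StackSorting

theorem triple_sublist_append {α : Type} {x y z : α} {l₁ l₂ : List α}
    (h : [x, y, z] <+ l₁ ++ l₂) :
    [x, y, z] <+ l₁ ∨ ([x, y] <+ l₁ ∧ z ∈ l₂) ∨ (x ∈ l₁ ∧ [y, z] <+ l₂) ∨ [x, y, z] <+ l₂ := by
  obtain ⟨s, u, hsu, hs, hu⟩ := List.sublist_append_iff.mp h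
  rcases s with _ | ⟨a, _ | ⟨b, _ | ⟨c, _ | ⟨d, s⟩⟩⟩⟩ <;>
    simp only [List.cons_append, List.nil_append, List.cons.injEq, List.nil_eq,
      reduceCtorEq, and_false] at hsu
  · exact .inr (.inr (.inr (hsu ▸ hu)))
  · obtain ⟨rfl, rfl⟩ := hsu
    exact .inr (.inr (.inl ⟨List.singleton_sublist.mp hs, hu⟩))
  · obtain ⟨rfl, rfl, rfl⟩ := hsu
    exact .inr (.inl ⟨hs, List.singleton_sublist.mp hu⟩)
  · obtain ⟨rfl, rfl, rfl, -⟩ := hsu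
    exact .inl hs

theorem mem_of_pair_sublist_cons {α : Type} {y z a : α} {l : List α} (h : [y, z] <+ a :: l) :
    z ∈ l := by
  rcases List.sublist_cons_iff.mp h with h | ⟨r, hr, h⟩
  · exact h.subset (by simp)
  · obtain ⟨-, rfl⟩ := List.cons.inj hr
    exact List.singleton_sublist.mp h

theorem cons_sublist_of_cons_sublist_append {α : Type} {b : α} {s L R : List α}
    (h : b :: s <+ L ++ R) (hb : b ∉ L) : b :: s <+ R := by
  obtain ⟨s₁, s₂, hs, hs₁, hs₂⟩ := List.sublist_append_iff.mp h
  rcases s₁ with _ | ⟨c, s₁⟩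
  · simpa [hs] using hs₂
  · obtain ⟨rfl, -⟩ := List.cons.inj hs
    exact absurd (hs₁.subset (List.mem_cons_self ..)) hb

section Avoidance

variable {α : Type} [LinearOrder α]

def AvoidsSublist231 (l : List α) : Prop :=
  ∀ x y z, [x, y, z] <+ l → z < x → x < y → False

theorem avoidsSublist231_nil : AvoidsSublist231 ([] : List α) :=
  fun _ _ _ h => by simpa using h.length_le

theorem AvoidsSublist231.sublist {l l' : List α} (h : AvoidsSublist231 l) (hs : l' <+ l) :
    AvoidsSublist231 l' :=
  fun x y z hsub => h x y z (hsub.trans hs)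

theorem AvoidsSublist231.map {β : Type} [LinearOrder β] {f : α → β} (hf : StrictMono f)
    {l : List α} (h : AvoidsSublist231 l) : AvoidsSublist231 (l.map f) :=
    fun x y z hsub hzx hxy => by
  obtain ⟨l', hl', hmap⟩ := List.sublist_map_iff.mp hsub
  rcases l' with _ | ⟨a, _ | ⟨b, _ | ⟨c, _ | _⟩⟩⟩ <;> simp at hmap
  obtain ⟨rfl, rfl, rfl⟩ := hmap
  exact h a b c hl' (hf.lt_iff_lt.mp hzx) (hf.lt_iff_lt.mp hxy)

theorem AvoidsSublist231.append {l₁ l₂ : List α} (h₁ : AvoidsSublist231 l₁)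
    (h₂ : AvoidsSublist231 l₂)
    (h₁₂ : ∀ x y z, [x, y] <+ l₁ → z ∈ l₂ → z < x → x < y → False)
    (h₂₁ : ∀ x y z, x ∈ l₁ → [y, z] <+ l₂ → z < x → x < y → False) :
    AvoidsSublist231 (l₁ ++ l₂) := fun x y z h hzx hxy => by
  rcases triple_sublist_append h with h | ⟨h, hz⟩ | ⟨hx, h⟩ | h
  exacts [h₁ x y z h hzx hxy, h₁₂ x y z h hz hzx hxy, h₂₁ x y z hx h hzx hxy,
    h₂ x y z h hzx hxy]

theorem avoidsSublist231_append_cons_iff {L R : List α} {m : α} (hL : ∀ x ∈ L, x < m)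
    (hR : ∀ x ∈ R, x ≤ m) :
    AvoidsSublist231 (L ++ m :: R) ↔
      AvoidsSublist231 L ∧ AvoidsSublist231 R ∧ ∀ x ∈ L, ∀ z ∈ R, x ≤ z := by
  refine ⟨fun h => ⟨h.sublist (List.sublist_append_left _ _),
    h.sublist ((List.sublist_cons_self _ _).trans (List.sublist_append_right _ _)),
    fun x hx z hz => not_lt.mp fun hzx => h x m z ?_ hzx (hL x hx)⟩, ?_⟩
  · exact (List.singleton_sublist.mpr hx).append (List.cons_sublist_cons.mpr
      (List.singleton_sublist.mpr hz))
  rintro ⟨hL', hR', hLR⟩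
  have hm : AvoidsSublist231 [m] := fun _ _ _ h => by simpa using h.length_le
  have hmR : AvoidsSublist231 ([m] ++ R) :=
    hm.append hR' (fun _ _ _ h => by simpa using h.length_le) fun x y _ hx hyz _ hxy => by
      rw [List.mem_singleton] at hx
      exact (hR y (hyz.subset (by simp))).not_gt (hx ▸ hxy)
  refine hL'.append hmR (fun x _ z hxy hz hzx _ => ?_)
    fun x _ z hx hyz hzx _ => (hLR x hx z (mem_of_pair_sublist_cons hyz)).not_gt hzx
  have hxL : x ∈ L := hxy.subset (by simp)
  rcases List.mem_cons.mp hz with rfl | hz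
  · exact (hL x hxL).not_gt hzx
  · exact (hLR x hxL z hz).not_gt hzx

end Avoidance

theorem pairwise_lt_S_iff {α : Type} [LinearOrder α] {l : List α} (hl : l.Nodup) :
    (S l).Pairwise (· < ·) ↔ AvoidsSublist231 l := by
  induction l using induction_on_max with
  | nil => simpa [S] using avoidsSublist231_nil
  | append_cons L m R hL hR ihL ihR =>
    obtain ⟨hndL, hndmR, hdisj⟩ := List.nodup_append.mp hl
    obtain ⟨hmR, hndR⟩ := List.nodup_cons.mp hndmR
    have hR' : ∀ x ∈ R, x < m := fun x hx => (hR x hx).lt_of_ne fun h => hmR (h ▸ hx)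
    rw [S_append_cons hL hR, avoidsSublist231_append_cons_iff hL hR, ← ihL hndL, ← ihR hndR,
      List.pairwise_append, List.pairwise_append]
    simp only [(S_perm _).mem_iff, List.mem_append, List.mem_singleton, List.pairwise_singleton,
      true_and, forall_eq]
    constructor
    · rintro ⟨⟨hSL, hSR, hLR⟩, -⟩
      exact ⟨hSL, hSR, fun x hx z hz => (hLR x hx z hz).le⟩
    · rintro ⟨hSL, hSR, hLR⟩
      refine ⟨⟨hSL, hSR, fun x hx z hz => (hLR x hx z hz).lt_of_ne ?_⟩, ?_⟩
      · exact hdisj x hx z (List.mem_cons_of_mem _ hz)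
      · rintro x (hx | hx)
        exacts [hL x hx, hR' x hx]

theorem mem_idPerm {a n : ℕ} : a ∈ idPerm n ↔ 1 ≤ a ∧ a ≤ n := by
  rw [idPerm, List.mem_range'_1]; omega

theorem nodup_idPerm (n : ℕ) : (idPerm n).Nodup := List.nodup_range'

theorem pairwise_lt_idPerm (n : ℕ) : (idPerm n).Pairwise (· < ·) := List.pairwise_lt_range'

theorem mem_Icc_of_perm_idPerm {l : List ℕ} {n x : ℕ} (h : l ~ idPerm n) (hx : x ∈ l) :
    1 ≤ x ∧ x ≤ n :=
  mem_idPerm.mp (h.subset hx)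

theorem perm_idPerm_of_nodup {l : List ℕ} (hnd : l.Nodup)
    (hmem : ∀ a ∈ l, 1 ≤ a ∧ a ≤ l.length) : l ~ idPerm l.length :=
  (hnd.subperm fun a ha => mem_idPerm.mpr (hmem a ha)).perm_of_length_le (by simp [idPerm])

theorem is2SS_iff {l : List ℕ} : Is2SS l ↔ l ~ idPerm l.length ∧ AvoidsSublist231 (S l) := by
  refine and_congr_right fun hperm => ?_
  have hnd : (S l).Nodup := ((S_perm l).trans hperm).nodup_iff.mpr (nodup_idPerm _)
  rw [← pairwise_lt_S_iff hnd]
  refine ⟨fun h => h ▸ pairwise_lt_idPerm _, fun h => ?_⟩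
  exact ((S_perm _).trans ((S_perm l).trans hperm)).eq_of_pairwise
    (fun a b _ _ hab hba => absurd hab hba.not_gt) h (pairwise_lt_idPerm _)

theorem length_lrMaxima (l : List ℕ) : (lrMaxima l).length = lmax l := by
  simp [lrMaxima, lmax, List.countP_eq_length_filter]

theorem exists_eq_append_cons_of_mem_lrMaxima {l : List ℕ} {a : ℕ} (ha : a ∈ lrMaxima l) :
    ∃ L R, l = L ++ a :: R ∧ ∀ w ∈ L, w < a := by
  obtain ⟨j, hj, rfl⟩ := List.mem_map.mp ha
  obtain ⟨hjl, hmax⟩ := List.mem_filter.mp hj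
  have hjl : j < l.length := List.mem_range.mp hjl
  refine ⟨l.take j, l.drop (j + 1), ?_, fun w hw => ?_⟩
  · rw [List.getD_eq_getElem _ _ hjl, ← List.drop_eq_getElem_cons hjl, List.take_append_drop]
  · simpa using List.all_eq_true.mp hmax w hw

theorem mem_of_mem_lrMaxima {l : List ℕ} {a : ℕ} (ha : a ∈ lrMaxima l) : a ∈ l := by
  obtain ⟨L, R, rfl, -⟩ := exists_eq_append_cons_of_mem_lrMaxima ha
  simp

theorem lrm_mem_lrMaxima {p : List ℕ} {i : ℕ} (hi1 : 1 ≤ i) (hi2 : i ≤ slmax p) :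
    lrm p i ∈ lrMaxima (S p) := by
  have hi : i - 1 < (lrMaxima (S p)).length := by
    rw [length_lrMaxima]
    exact lt_of_lt_of_le (by omega) hi2
  rw [lrm, List.getD_eq_getElem _ _ hi]
  exact List.getElem_mem hi

theorem le_of_mem_lrMaxima_S {p : List ℕ} {n a : ℕ} (hp : p ~ idPerm n)
    (ha : a ∈ lrMaxima (S p)) : a ≤ n :=
  (mem_Icc_of_perm_idPerm ((S_perm p).trans hp) (mem_of_mem_lrMaxima ha)).2

theorem AvoidsSublist231.le_of_pair_sublist_of_mem_lrMaxima {l : List ℕ} {a b c : ℕ}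
    (hav : AvoidsSublist231 l) (hnd : l.Nodup) (ha : a ∈ lrMaxima l) (hbc : [b, c] <+ l)
    (hc : c ≤ a) : b ≤ a := by
  obtain ⟨L, R, rfl, hL⟩ := exists_eq_append_cons_of_mem_lrMaxima ha
  by_contra! hab
  have hbcR : [b, c] <+ R :=
    (cons_sublist_of_cons_sublist_append hbc fun hb => (hL b hb).not_gt hab).of_cons_of_ne
      hab.ne'
  have hca : c ≠ a := fun h => (List.nodup_cons.mp (List.nodup_append.mp hnd).2.1).1
    (h ▸ hbcR.subset (by simp))
  exact hav a b c ((List.nil_sublist L).append (List.cons_sublist_cons.mpr hbcR))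
    (hc.lt_of_ne hca) hab

section Shift

variable {k₁ k₂ m : ℕ}

theorem strictMono_shift3_fun (h : k₁ ≤ k₂) :
    StrictMono fun a : ℕ => if a < m then a + k₁ else a + k₂ := by
  intro a b hab
  dsimp only
  split_ifs <;> omega

theorem S_shift3 (h : k₁ ≤ k₂) (l : List ℕ) : S (shift3 k₁ m k₂ l) = shift3 k₁ m k₂ (S l) :=
  S_map (strictMono_shift3_fun h) l

theorem AvoidsSublist231.shift3 (h : k₁ ≤ k₂) {l : List ℕ} (hl : AvoidsSublist231 l) :
    AvoidsSublist231 (shift3 k₁ m k₂ l) :=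
  hl.map (strictMono_shift3_fun h)

theorem nodup_shift3 (h : k₁ ≤ k₂) {l : List ℕ} (hl : l.Nodup) : (shift3 k₁ m k₂ l).Nodup :=
  hl.map (strictMono_shift3_fun h).injective

end Shift

theorem avoidsSublist231_shift3_append {A B : List ℕ} {k a : ℕ} (hA : ∀ x ∈ A, x ≤ k)
    (hB : ∀ x ∈ B, 1 ≤ x) (havA : AvoidsSublist231 A) (havB : AvoidsSublist231 B)
    (hnd : B.Nodup) (ha : a ∈ lrMaxima B) :
    AvoidsSublist231 (shift3 0 k a A ++ shift3 (k - 1) (a + 1) k B) := by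
  refine (havA.shift3 (Nat.zero_le _)).append (havB.shift3 (Nat.sub_le _ _)) ?_ ?_
  · intro x y z hxy hz hzx hxy'
    have hx : x ∈ shift3 0 k a A := hxy.subset (by simp)
    have hy : y ∈ shift3 0 k a A := hxy.subset (by simp)
    simp only [shift3, List.mem_map] at hx hy hz
    obtain ⟨x, hx, rfl⟩ := hx
    obtain ⟨y, hy, rfl⟩ := hy
    obtain ⟨z, hz, rfl⟩ := hz
    have := hA x hx
    have := hA y hy
    have := hB z hz
    split_ifs at * <;> omega
  · intro x y z hx hyz hzx hxy
    simp only [shift3, List.mem_map] at hx hyz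
    obtain ⟨x, hx, rfl⟩ := hx
    obtain ⟨l', hl', hmap⟩ := List.sublist_map_iff.mp hyz
    rcases l' with _ | ⟨b, _ | ⟨c, _ | _⟩⟩ <;>
      simp only [List.map_cons, List.map_nil, List.cons.injEq, reduceCtorEq, and_false,
        and_true] at hmap
    obtain ⟨rfl, rfl⟩ := hmap
    have key := havB.le_of_pair_sublist_of_mem_lrMaxima hnd ha hl'
    have := hA x hx
    have := hB c (hl'.subset (by simp))
    split_ifs at * <;> omega

section C2

variable {p1 p2 : List ℕ} {i : ℕ}

theorem length_C2 : (C2 p1 p2 i).length = p1.length + p2.length + 1 := by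
  simp only [C2, shift3, List.length_append, List.length_map, List.length_cons]
  omega

theorem S_C2 (hp1 : ∀ x ∈ p1, x ≤ p1.length) (hp2 : ∀ x ∈ p2, x ≤ p2.length)
    (ha : lrm p2 i ≤ p2.length) :
    S (C2 p1 p2 i) = shift3 0 p1.length (lrm p2 i) (S p1) ++
      shift3 (p1.length - 1) (lrm p2 i + 1) p1.length (S p2) ++ [p1.length + p2.length + 1] := by
  have hL : ∀ y ∈ shift3 0 p1.length (lrm p2 i) p1, y < p1.length + p2.length + 1 := by
    simp only [shift3, List.mem_map]
    rintro _ ⟨x, hx, rfl⟩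
    have := hp1 x hx
    split_ifs <;> omega
  have hR : ∀ y ∈ shift3 (p1.length - 1) (lrm p2 i + 1) p1.length p2,
      y ≤ p1.length + p2.length + 1 := by
    simp only [shift3, List.mem_map]
    rintro _ ⟨x, hx, rfl⟩
    have := hp2 x hx
    split_ifs <;> omega
  rw [C2, S_append_cons hL hR, S_shift3 (Nat.zero_le _), S_shift3 (Nat.sub_le _ _)]

theorem C2_perm (hp1 : p1 ~ idPerm p1.length) (hp2 : p2 ~ idPerm p2.length)
    (ha : lrm p2 i ≤ p2.length) : C2 p1 p2 i ~ idPerm (C2 p1 p2 i).length := by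
  have hmem1 := fun x (hx : x ∈ p1) => mem_Icc_of_perm_idPerm hp1 hx
  have hmem2 := fun x (hx : x ∈ p2) => mem_Icc_of_perm_idPerm hp2 hx
  have hnd1 : p1.Nodup := hp1.nodup_iff.mpr (nodup_idPerm _)
  have hnd2 : p2.Nodup := hp2.nodup_iff.mpr (nodup_idPerm _)
  refine perm_idPerm_of_nodup ?_ ?_
  · rw [C2, List.nodup_append, List.nodup_cons]
    refine ⟨nodup_shift3 (Nat.zero_le _) hnd1, ⟨?_, nodup_shift3 (Nat.sub_le _ _) hnd2⟩, ?_⟩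
    · simp only [shift3, List.mem_map, not_exists, not_and]
      intro x hx
      have := hmem2 x hx
      split_ifs <;> omega
    · simp only [shift3, List.mem_cons, List.mem_map]
      rintro _ ⟨x, hx, rfl⟩ _ (rfl | ⟨y, hy, rfl⟩)
      all_goals have := hmem1 x hx
      · split_ifs <;> omega
      · have := hmem2 y hy
        split_ifs <;> omega
  · rw [length_C2]
    simp only [C2, shift3, List.mem_append, List.mem_cons, List.mem_map]
    rintro _ (⟨x, hx, rfl⟩ | rfl | ⟨x, hx, rfl⟩)
    · have := hmem1 x hx
      split_ifs <;> omega
    · omega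
    · have := hmem2 x hx
      split_ifs <;> omega

theorem avoidsSublist231_S_C2 (hp1 : p1 ~ idPerm p1.length) (hp2 : p2 ~ idPerm p2.length)
    (hav1 : AvoidsSublist231 (S p1)) (hav2 : AvoidsSublist231 (S p2))
    (ha : lrm p2 i ∈ lrMaxima (S p2)) : AvoidsSublist231 (S (C2 p1 p2 i)) := by
  have hmem1 := fun x (hx : x ∈ S p1) => mem_Icc_of_perm_idPerm ((S_perm p1).trans hp1) hx
  have hmem2 := fun x (hx : x ∈ S p2) => mem_Icc_of_perm_idPerm ((S_perm p2).trans hp2) hx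
  have haℓ : lrm p2 i ≤ p2.length := le_of_mem_lrMaxima_S hp2 ha
  rw [S_C2 (fun x hx => (mem_Icc_of_perm_idPerm hp1 hx).2)
    (fun x hx => (mem_Icc_of_perm_idPerm hp2 hx).2) haℓ]
  refine (avoidsSublist231_append_cons_iff ?_ (by simp)).mpr
    ⟨avoidsSublist231_shift3_append (fun x hx => (hmem1 x hx).2) (fun x hx => (hmem2 x hx).1)
      hav1 hav2 (((S_perm p2).trans hp2).nodup_iff.mpr (nodup_idPerm _)) ha,
      avoidsSublist231_nil, by simp⟩
  simp only [shift3, List.mem_append, List.mem_map]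
  rintro _ (⟨x, hx, rfl⟩ | ⟨x, hx, rfl⟩)
  · have := hmem1 x hx
    split_ifs <;> omega
  · have := hmem2 x hx
    split_ifs <;> omega

end C2

theorem C2_valid_general (k ℓ : ℕ) (π1 π2 : List ℕ)
    (h1 : π1.length = k) (h1' : Is2SS π1) (h2 : π2.length = ℓ) (h2' : Is2SS π2)
    (t : ℕ) (ht : t = slmax π2) (i : ℕ) (hi1 : 1 ≤ i) (hi2 : i ≤ t) :
    (C2 π1 π2 i).length = k + ℓ + 1 ∧ Is2SS (C2 π1 π2 i) := by
  rw [is2SS_iff] at h1' h2' ⊢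
  obtain ⟨hp1, hav1⟩ := h1'
  obtain ⟨hp2, hav2⟩ := h2'
  have ha : lrm π2 i ∈ lrMaxima (S π2) := lrm_mem_lrMaxima hi1 (ht ▸ hi2)
  refine ⟨by rw [length_C2, h1, h2], C2_perm hp1 hp2 (le_of_mem_lrMaxima_S hp2 ha), ?_⟩
  exact avoidsSublist231_S_C2 hp1 hp2 hav1 hav2 ha

/-- For `k, ℓ > 0`, `π1 ∈ T_k`, `π2 ∈ T_ℓ`, `t = slmax(π2)` and `1 ≤ i ≤ t`,
`C2(π1, π2, i)` is a two-stack sortable permutation of length `k + ℓ + 1`. -/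
theorem C2_valid (k ℓ : ℕ) (hk : 0 < k) (hℓ : 0 < ℓ) (π1 π2 : List ℕ)
    (h1 : π1.length = k) (h1' : Is2SS π1) (h2 : π2.length = ℓ) (h2' : Is2SS π2)
    (t : ℕ) (ht : t = slmax π2) (i : ℕ) (hi1 : 1 ≤ i) (hi2 : i ≤ t) :
    (C2 π1 π2 i).length = k + ℓ + 1 ∧ Is2SS (C2 π1 π2 i) :=
  C2_valid_general k ℓ π1 π2 h1 h1' h2 h2' t ht i hi1 hi2

end TSP
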